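/- For any request sets R_1,...,R_n ⊆ {1,...,T} and R'_1,...,R'_n ⊆ {1,...,T} and any agent i ∈ {1,...,n}, the deterministic DMMF allocation satisfies |W_i(R_1,...,R_n) − W_i(R'_1,...,R'_n)| ≤ Σ_{j=1}^n |R_j △ R'_j|, where △ denotes symmetric difference of sets. -/

import Mathlib

open scoped symmDiff

/-- Winner predicate: given fair shares `α`, previous win counts `Wprev`, and the requests `r`
in the current round, agent `i` wins iff it requests and beats (in normalized win count,
ties broken by smallest index) every other requesting agent. -/
def winsAt {n : ℕ} (α : Fin n → ℝ) (Wprev : Fin n → ℕ) (r : Fin n → Bool) (i : Fin n) : Prop :=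
  r i = true ∧ ∀ j : Fin n, r j = true →
    ((Wprev i : ℝ) / α i < (Wprev j : ℝ) / α j ∨
      ((Wprev i : ℝ) / α i = (Wprev j : ℝ) / α j ∧ i ≤ j))

open Classical in
/-- `W α r t i` : number of rounds, among the first `t` rounds, won by agent `i` under the
DMMF allocation rule, when the (sample-path) requests are given by `r` (`r t i = true` means
agent `i` requests in round `t+1`). -/
noncomputable def W {n : ℕ} (α : Fin n → ℝ) (r : ℕ → Fin n → Bool) : ℕ → Fin n → ℕ
  | 0, _ => 0
  | t + 1, i => W α r t i + (if winsAt α (W α r t) (r t) i then 1 else 0)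

/-! Couple two runs `a`, `b` of the allocation and track the excess `∑ i, (b i - a i)` of `b`
over `a`, where the truncated subtraction of `ℕ` is exactly the positive part. One round adds
at most one to the excess (only one agent wins), and a round with the same requests in both
runs does not increase it: if the two winners `w ≠ w'` differ, then `a w < b w` or
`b w' < a w'`, for otherwise chaining `b w ≤ a w` and `a w' ≤ b w'` with the two winning
conditions gives a cycle of normalized counts that forces `w = w'`. Hence the excess after
`t` rounds is at most the number of rounds whose requests differ, and that number is at most
`∑ j, #(R j ∆ R' j)`. -/

section Allocation

open Finset

variable {n : ℕ} {α : Fin n → ℝ}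

theorem winsAt_iff_toLex_le {a : Fin n → ℕ} {ρ : Fin n → Bool} {i : Fin n} :
    winsAt α a ρ i ↔ ρ i = true ∧ ∀ j, ρ j = true →
      toLex ((a i : ℝ) / α i, i) ≤ toLex ((a j : ℝ) / α j, j) := by
  simp only [winsAt, Prod.Lex.toLex_le_toLex]

theorem winsAt_unique {a : Fin n → ℕ} {ρ : Fin n → Bool} {i j : Fin n}
    (hi : winsAt α a ρ i) (hj : winsAt α a ρ j) : i = j := by
  rw [winsAt_iff_toLex_le] at hi hj
  have h := le_antisymm (hi.2 j hj.1) (hj.2 i hi.1)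
  exact congrArg Prod.snd (toLex.injective h)

theorem exists_winsAt (a : Fin n → ℕ) {ρ : Fin n → Bool} (h : ∃ j, ρ j = true) :
    ∃ i, winsAt α a ρ i := by
  obtain ⟨i, hi, hmin⟩ := exists_min_image {j | ρ j = true}
    (fun j => toLex ((a j : ℝ) / α j, j)) (by simpa [Finset.Nonempty] using h)
  exact ⟨i, winsAt_iff_toLex_le.2 ⟨by simpa using hi, fun j hj => hmin j (by simpa using hj)⟩⟩

theorem lt_or_lt_of_winsAt_of_winsAt (hα : ∀ i, 0 < α i) {a b : Fin n → ℕ} {ρ : Fin n → Bool}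
    {w w' : Fin n} (hne : w ≠ w') (hw : winsAt α a ρ w) (hw' : winsAt α b ρ w') :
    a w < b w ∨ b w' < a w' := by
  by_contra! h
  have hbw : (b w : ℝ) / α w ≤ (a w : ℝ) / α w :=
    div_le_div_of_nonneg_right (by exact_mod_cast h.1) (hα w).le
  have haw' : (a w' : ℝ) / α w' ≤ (b w' : ℝ) / α w' :=
    div_le_div_of_nonneg_right (by exact_mod_cast h.2) (hα w').le
  rcases hw.2 w' hw'.1 with h1 | ⟨h1, h1'⟩ <;> rcases hw'.2 w hw.1 with h2 | ⟨h2, h2'⟩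
  · linarith
  · linarith
  · linarith
  · exact hne (le_antisymm h1' h2')

open Classical in
noncomputable def allocStep (α : Fin n → ℝ) (a : Fin n → ℕ) (ρ : Fin n → Bool) : Fin n → ℕ :=
  fun i => a i + if winsAt α a ρ i then 1 else 0

theorem W_succ (r : ℕ → Fin n → Bool) (t : ℕ) :
    W α r (t + 1) = allocStep α (W α r t) (r t) :=
  rfl

theorem allocStep_of_forall_eq_false (a : Fin n → ℕ) {ρ : Fin n → Bool}
    (h : ∀ j, ρ j = false) : allocStep α a ρ = a := by
  funext i
  simp [allocStep, winsAt, h]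

theorem allocStep_of_winsAt {a : Fin n → ℕ} {ρ : Fin n → Bool} {w : Fin n}
    (hw : winsAt α a ρ w) (i : Fin n) : allocStep α a ρ i = a i + if i = w then 1 else 0 := by
  have : winsAt α a ρ i ↔ i = w := ⟨fun hi => winsAt_unique hi hw, fun h => h ▸ hw⟩
  simp only [allocStep, this]

open Classical in
theorem sum_ite_winsAt_le_one (a : Fin n → ℕ) (ρ : Fin n → Bool) :
    ∑ i, (if winsAt α a ρ i then 1 else 0) ≤ 1 := by
  rw [sum_boole, Nat.cast_id, card_le_one]
  intro i hi j hj
  exact winsAt_unique (mem_filter.1 hi).2 (mem_filter.1 hj).2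

theorem sum_le_sum_of_pair {ι M : Type*} [Fintype ι] [DecidableEq ι] [AddCommMonoid M]
    [PartialOrder M] [IsOrderedAddMonoid M] {f g : ι → M} {w w' : ι} (hne : w ≠ w')
    (hpair : f w + f w' ≤ g w + g w') (hrest : ∀ i, i ≠ w → i ≠ w' → f i = g i) :
    ∑ i, f i ≤ ∑ i, g i := by
  rw [← sum_add_sum_compl {w, w'} f, ← sum_add_sum_compl {w, w'} g, sum_pair hne,
    sum_pair hne, sum_congr rfl fun i hi => hrest i (by simp_all) (by simp_all)]
  exact add_le_add_left hpair _

open Classical in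
theorem sum_allocStep_sub_le (a b : Fin n → ℕ) (ρ ρ' : Fin n → Bool) :
    ∑ i, (allocStep α b ρ' i - allocStep α a ρ i) ≤ ∑ i, (b i - a i) + 1 :=
  calc ∑ i, (allocStep α b ρ' i - allocStep α a ρ i)
      ≤ ∑ i, ((b i - a i) + if winsAt α b ρ' i then 1 else 0) :=
        sum_le_sum fun i _ => by simp only [allocStep]; omega
    _ ≤ ∑ i, (b i - a i) + 1 := by
        rw [sum_add_distrib]
        exact Nat.add_le_add_left (sum_ite_winsAt_le_one b ρ') _

theorem sum_allocStep_sub_le_of_same (hα : ∀ i, 0 < α i) (a b : Fin n → ℕ) (ρ : Fin n → Bool) :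
    ∑ i, (allocStep α b ρ i - allocStep α a ρ i) ≤ ∑ i, (b i - a i) := by
  by_cases hρ : ∃ j, ρ j = true
  swap
  · simp only [allocStep_of_forall_eq_false _ (by simpa using hρ), le_refl]
  obtain ⟨w, hw⟩ := exists_winsAt (α := α) a hρ
  obtain ⟨w', hw'⟩ := exists_winsAt (α := α) b hρ
  simp only [allocStep_of_winsAt hw, allocStep_of_winsAt hw']
  by_cases hww : w = w'
  · subst hww
    exact sum_le_sum fun i _ => by split_ifs <;> omega
  have hlead := lt_or_lt_of_winsAt_of_winsAt hα hww hw hw'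
  apply sum_le_sum_of_pair hww
  · simp only [if_true, if_neg hww, if_neg (Ne.symm hww)]
    omega
  · intro i hi hi'
    simp only [if_neg hi, if_neg hi', add_zero]

theorem sum_W_sub_le_card_filter_ne (hα : ∀ i, 0 < α i) (r r' : ℕ → Fin n → Bool) (t : ℕ) :
    ∑ i, (W α r' t i - W α r t i) ≤ #{s ∈ range t | r s ≠ r' s} := by
  induction t with
  | zero => simp [W]
  | succ t ih =>
    rw [W_succ, W_succ, range_add_one, filter_insert]
    by_cases hrt : r t = r' t
    · rw [if_neg (not_not.2 hrt), ← hrt]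
      exact (sum_allocStep_sub_le_of_same hα _ _ _).trans ih
    · rw [if_pos hrt, card_insert_of_notMem (by simp)]
      exact (sum_allocStep_sub_le _ _ _ _).trans (Nat.add_le_add_right ih 1)

theorem W_sub_W_le_card_filter_ne (hα : ∀ i, 0 < α i) (r r' : ℕ → Fin n → Bool) (t : ℕ)
    (i : Fin n) : (W α r' t i : ℤ) - W α r t i ≤ #{s ∈ range t | r s ≠ r' s} := by
  have h := (single_le_sum (fun j _ => Nat.zero_le (W α r' t j - W α r t j)) (mem_univ i)).trans
    (sum_W_sub_le_card_filter_ne hα r r' t)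
  omega

theorem card_filter_ne_le_sum_card_symmDiff (R R' : Fin n → Finset ℕ) (t : ℕ) :
    #{s ∈ range t | (fun k => decide (s + 1 ∈ R k)) ≠ (fun k => decide (s + 1 ∈ R' k))}
      ≤ ∑ j, #(R j ∆ R' j) := by
  classical
  refine (card_le_card_of_injOn (· + 1) (t := univ.biUnion fun j => R j ∆ R' j) ?_
    (add_left_injective 1).injOn).trans card_biUnion_le
  intro s hs
  obtain ⟨k, hk⟩ := Function.ne_iff.1 (mem_filter.1 hs).2
  simp only [coe_biUnion, coe_univ, Set.mem_univ, Set.iUnion_true, Set.mem_iUnion, mem_coe,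
    mem_symmDiff]
  exact ⟨k, by by_cases s + 1 ∈ R k <;> simp_all⟩

end Allocation

theorem detDMMF_bounded_difference_general {n T : ℕ} (α : Fin n → ℝ) (hα : ∀ i, 0 < α i)
    (R R' : Fin n → Finset ℕ) (i : Fin n) :
    |(W α (fun s k => decide ((s + 1) ∈ R k)) T i : ℤ)
        - (W α (fun s k => decide ((s + 1) ∈ R' k)) T i : ℤ)|
      ≤ ∑ j : Fin n, ((R j ∆ R' j).card : ℤ) := by
  have hRR' : (_ : ℤ) ≤ _ := Nat.cast_le.2 (card_filter_ne_le_sum_card_symmDiff R R' T)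
  have hR'R : (_ : ℤ) ≤ _ := Nat.cast_le.2 (card_filter_ne_le_sum_card_symmDiff R' R T)
  simp_rw [symmDiff_comm (R' _)] at hR'R
  push_cast at hRR' hR'R
  rw [abs_sub_le_iff]
  exact ⟨(W_sub_W_le_card_filter_ne hα _ _ T i).trans hR'R,
    (W_sub_W_le_card_filter_ne hα _ _ T i).trans hRR'⟩

/-- Bounded difference of the deterministic DMMF allocation: changing the
request sets `R₁, …, Rₙ ⊆ {1, …, T}` to `R'₁, …, R'ₙ ⊆ {1, …, T}` changes the total number
of rounds won by any agent `i` by at most `Σⱼ |Rⱼ △ R'ⱼ|`. -/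
theorem detDMMF_bounded_difference {n T : ℕ} (α : Fin n → ℝ) (hα : ∀ i, 0 < α i)
    (R R' : Fin n → Finset ℕ)
    (hR : ∀ j, R j ⊆ Finset.Icc 1 T) (hR' : ∀ j, R' j ⊆ Finset.Icc 1 T) (i : Fin n) :
    |(W α (fun s k => decide ((s + 1) ∈ R k)) T i : ℤ)
        - (W α (fun s k => decide ((s + 1) ∈ R' k)) T i : ℤ)|
      ≤ ∑ j : Fin n, ((R j ∆ R' j).card : ℤ) :=
  detDMMF_bounded_difference_general α hα R R' i
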